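/- Let B be a function from the set of prime numbers to [−1,1] and suppose there exist C > 0 and α > 0 such that for all subintervals [a,b] ⊆ [−1,1] and all x ≥ 2 one has |#{p ≤ x prime : B(p) ∈ [a,b]}/π(x) − μ([a,b])| ≤ C·x^{−α}, where μ is the Sato–Tate measure. Let ε be a real-valued function on the primes with |ε(p)| ≤ 1/(2√p) for all primes p. Then there exist C₁ > 0, β > 0 and x₀ > 0 such that for all x > x₀, |#{p ≤ x prime : B(p) > ε(p)}/π(x) − 1/2| ≤ C₁·x^{−β}. -/

import Mathlib

open Filter Set

/-- The number of primes `p ≤ x` belonging to the set `S`. -/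
noncomputable def primesCount (S : Set ℕ) (x : ℝ) : ℕ :=
  Nat.card {p : ℕ | p.Prime ∧ p ∈ S ∧ (p : ℝ) ≤ x}

/-- The prime counting function `π(x)`. -/
noncomputable def primePi (x : ℝ) : ℕ := primesCount Set.univ x

/-- `S` has Dirichlet density `δ`. -/
def HasDirichletDensity (S : Set ℕ) (δ : ℝ) : Prop :=
  Tendsto (fun z : ℝ => (∑' p : S, ((p : ℕ) : ℝ) ^ (-z)) / Real.log (1 / (z - 1)))
    (nhdsWithin 1 (Set.Ioi 1)) (nhds δ)

/-- `S` is a regular set of primes of Dirichlet density `δ`. -/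
def IsRegularPrimeSet (S : Set ℕ) (δ : ℝ) : Prop :=
  HasDirichletDensity S δ ∧
  ∃ (U : Set ℂ) (g : ℂ → ℂ), IsOpen U ∧ {z : ℂ | 1 ≤ z.re} ⊆ U ∧
    DifferentiableOn ℂ g U ∧
    ∀ z : ℂ, 1 < z.re →
      (∑' p : S, ((p : ℕ) : ℂ) ^ (-z)) = (δ : ℂ) * Complex.log (1 / (z - 1)) + g z

/-- `S` has natural density `d` within the primes. -/
def HasNaturalPrimeDensity (S : Set ℕ) (d : ℝ) : Prop :=
  Tendsto (fun x : ℝ => (primesCount S x : ℝ) / (primePi x : ℝ)) atTop (nhds d)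

/-- The Sato–Tate measure of the interval `[a,b]`. -/
noncomputable def stMeasure (a b : ℝ) : ℝ :=
  (2 / Real.pi) * ∫ t in a..b, Real.sqrt (1 - t ^ 2)

/-- `B` is equidistributed with respect to the Sato–Tate measure on the primes. -/
def IsSatoTateEquidistributed (B : ℕ → ℝ) : Prop :=
  ∀ a b : ℝ, -1 ≤ a → a ≤ b → b ≤ 1 →
    Tendsto (fun x : ℝ => (primesCount {p | B p ∈ Set.Icc a b} x : ℝ) / (primePi x : ℝ))
      atTop (nhds (stMeasure a b))

/-- `A ⊆ ℕ` has Dedekind–Dirichlet density `δ`. -/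
def HasDedekindDirichletDensity (A : Set ℕ) (δ : ℝ) : Prop :=
  Tendsto (fun z : ℝ => (z - 1) * ∑' n : A, ((n : ℕ) : ℝ) ^ (-z))
    (nhdsWithin 1 (Set.Ioi 1)) (nhds δ)

/-!
For primes `p > y` we have `|ε(p)| < δ := y^{-1/2}`, so apart from the primes `≤ y` the set
`{B > ε}` lies between `{B ∈ [δ, 1]}` and `{B ∈ [-δ, 1]}`, whose relative densities are
`1/2 ± δ` up to the error term. The primes `≤ y` are negligible without any Chebyshev bound:
the degenerate interval `[B(2), B(2)]` has Sato–Tate measure `0` but contains `2`, so the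
hypothesis itself gives `1/π(x) ≤ C x^{-α}`. Taking `y = x^{α/2}` yields the exponent `α/4`.
-/

lemma primesCount_set_finite (S : Set ℕ) (x : ℝ) :
    {p : ℕ | p.Prime ∧ p ∈ S ∧ (p : ℝ) ≤ x}.Finite :=
  (Set.finite_Iic ⌊x⌋₊).subset fun _ ⟨_, _, hpx⟩ => Nat.le_floor hpx

lemma one_le_primesCount {S : Set ℕ} {x : ℝ} {p : ℕ} (hp : p.Prime) (hpS : p ∈ S)
    (hpx : (p : ℝ) ≤ x) : 1 ≤ primesCount S x := by
  rw [primesCount, Nat.card_coe_set_eq]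
  exact (Set.ncard_pos (primesCount_set_finite S x)).2 ⟨p, hp, hpS, hpx⟩

lemma primesCount_le_add {S T U : Set ℕ} {x : ℝ}
    (h : ∀ p : ℕ, p.Prime → (p : ℝ) ≤ x → p ∈ S → p ∈ T ∨ p ∈ U) :
    primesCount S x ≤ primesCount T x + primesCount U x := by
  simp only [primesCount, Nat.card_coe_set_eq]
  refine (Set.ncard_le_ncard ?_ ((primesCount_set_finite T x).union
    (primesCount_set_finite U x))).trans (Set.ncard_union_le _ _)
  rintro p ⟨hp, hpS, hpx⟩
  exact (h p hp hpx hpS).imp (fun hpT => ⟨hp, hpT, hpx⟩) (fun hpU => ⟨hp, hpU, hpx⟩)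

lemma primesCount_setOf_le_le_add_one {x y : ℝ} (hy : 0 ≤ y) :
    (primesCount {p : ℕ | (p : ℝ) ≤ y} x : ℝ) ≤ y + 1 := by
  have hsub : {p : ℕ | p.Prime ∧ p ∈ {p : ℕ | (p : ℝ) ≤ y} ∧ (p : ℝ) ≤ x}
      ⊆ ↑(Finset.range (⌊y⌋₊ + 1)) := fun p ⟨_, hpy, _⟩ =>
    Finset.mem_range.2 (Nat.lt_succ_of_le (Nat.le_floor hpy))
  have hcard := Set.ncard_le_ncard hsub (Finset.finite_toSet _)
  rw [Set.ncard_coe_finset, Finset.card_range] at hcard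
  rw [primesCount, Nat.card_coe_set_eq]
  calc (_ : ℝ) ≤ (⌊y⌋₊ + 1 : ℕ) := by exact_mod_cast hcard
    _ ≤ y + 1 := by push_cast; linarith [Nat.floor_le hy]

section SatoTate

open intervalIntegral

lemma stMeasure_self (a : ℝ) : stMeasure a a = 0 := by
  simp [stMeasure]

lemma stMeasure_add (a b c : ℝ) : stMeasure a b + stMeasure b c = stMeasure a c := by
  have hint : ∀ a b : ℝ, IntervalIntegrable (fun t => √(1 - t ^ 2)) MeasureTheory.volume a b :=
    fun a b => (by fun_prop : Continuous fun t : ℝ => √(1 - t ^ 2)).intervalIntegrable a b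
  simp only [stMeasure, ← mul_add, integral_add_adjacent_intervals (hint a b) (hint b c)]

lemma abs_stMeasure_le (a b : ℝ) : |stMeasure a b| ≤ |b - a| := by
  have hint : ‖∫ t in a..b, √(1 - t ^ 2)‖ ≤ 1 * |b - a| :=
    norm_integral_le_of_norm_le_const fun t _ => by
      rw [Real.norm_of_nonneg (Real.sqrt_nonneg _)]
      exact Real.sqrt_le_one.2 (by nlinarith [sq_nonneg t])
  have hpi : 2 / Real.pi ≤ 1 := (div_le_one Real.pi_pos).2 (by linarith [Real.pi_gt_three])
  rw [Real.norm_eq_abs, one_mul] at hint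
  rw [stMeasure, abs_mul, abs_of_pos (by positivity : 0 < 2 / Real.pi)]
  nlinarith [abs_nonneg (∫ t in a..b, √(1 - t ^ 2))]

lemma stMeasure_neg (a b : ℝ) : stMeasure (-b) (-a) = stMeasure a b := by
  rw [stMeasure, stMeasure, ← integral_comp_neg]
  simp only [neg_sq]

lemma stMeasure_zero_one : stMeasure 0 1 = 1 / 2 := by
  have hfull : stMeasure (-1) 1 = 1 := by
    rw [stMeasure, integral_sqrt_one_sub_sq]
    field_simp
  have := stMeasure_add (-1) 0 1
  rw [← neg_zero, stMeasure_neg, neg_zero, hfull] at this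
  linarith

lemma abs_stMeasure_sub_half_le (a : ℝ) : |stMeasure a 1 - 1 / 2| ≤ |a| := by
  rw [← stMeasure_zero_one, ← stMeasure_add a 0 1, add_sub_cancel_right]
  simpa using abs_stMeasure_le a 0

end SatoTate

lemma inv_primePi_le {B : ℕ → ℝ} {x E : ℝ} {p : ℕ} (hp : p.Prime) (hpx : (p : ℝ) ≤ x)
    (h : |(primesCount {q : ℕ | B q ∈ Set.Icc (B p) (B p)} x : ℝ) / (primePi x : ℝ)
      - stMeasure (B p) (B p)| ≤ E) :
    (primePi x : ℝ)⁻¹ ≤ E := by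
  have hN : (1 : ℝ) ≤ primesCount {q : ℕ | B q ∈ Set.Icc (B p) (B p)} x := by
    exact_mod_cast one_le_primesCount (S := {q | B q ∈ Set.Icc (B p) (B p)}) hp
      (Set.left_mem_Icc.2 le_rfl) hpx
  have hP : (0 : ℝ) < primePi x := by
    exact_mod_cast one_le_primesCount hp (Set.mem_univ p) hpx
  rw [stMeasure_self, sub_zero, abs_of_nonneg (by positivity)] at h
  calc (primePi x : ℝ)⁻¹ = 1 / primePi x := (one_div _).symm
    _ ≤ _ / primePi x := by gcongr
    _ ≤ E := h

lemma abs_primesCount_div_primePi_sub_half_le {B ε : ℕ → ℝ} {x y δ E : ℝ} (hx : 2 ≤ x)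
    (hB : ∀ p : ℕ, p.Prime → B p ∈ Set.Icc (-1 : ℝ) 1)
    (herr : ∀ a b : ℝ, -1 ≤ a → a ≤ b → b ≤ 1 →
      |(primesCount {p : ℕ | B p ∈ Set.Icc a b} x : ℝ) / (primePi x : ℝ) - stMeasure a b| ≤ E)
    (hy : 0 ≤ y) (hδ₀ : 0 ≤ δ) (hδ₁ : δ ≤ 1) (hε : ∀ p : ℕ, p.Prime → y < p → |ε p| < δ) :
    |(primesCount {p : ℕ | p.Prime ∧ ε p < B p} x : ℝ) / (primePi x : ℝ) - 1 / 2|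
      ≤ δ + (y + 2) * E := by
  set P : ℝ := (primePi x : ℝ)
  have hinv : P⁻¹ ≤ E := inv_primePi_le Nat.prime_two (by exact_mod_cast hx)
    (herr _ _ (hB 2 Nat.prime_two).1 le_rfl (hB 2 Nat.prime_two).2)
  have hP : 0 < P := Nat.cast_pos.2 (one_le_primesCount Nat.prime_two (Set.mem_univ 2) hx)
  have hsmall : (primesCount {p | (p : ℝ) ≤ y} x : ℝ) / P ≤ (y + 1) * E := by
    rw [div_eq_mul_inv]
    exact mul_le_mul (primesCount_setOf_le_le_add_one hy) hinv (inv_nonneg.2 hP.le) (by linarith)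
  have hupper : primesCount {p | p.Prime ∧ ε p < B p} x
      ≤ primesCount {p | B p ∈ Set.Icc (-δ) 1} x + primesCount {p | (p : ℝ) ≤ y} x :=
    primesCount_le_add fun p hp _ hpS => by
      rcases le_or_gt (p : ℝ) y with hpy | hpy
      · exact Or.inr hpy
      · exact Or.inl ⟨by linarith [neg_abs_le (ε p), hε p hp hpy, hpS.2], (hB p hp).2⟩
  have hlower : primesCount {p | B p ∈ Set.Icc δ 1} x
      ≤ primesCount {p | p.Prime ∧ ε p < B p} x + primesCount {p | (p : ℝ) ≤ y} x :=
    primesCount_le_add fun p hp _ hpS => by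
      rcases le_or_gt (p : ℝ) y with hpy | hpy
      · exact Or.inr hpy
      · exact Or.inl ⟨hp, by linarith [le_abs_self (ε p), hε p hp hpy, hpS.1]⟩
  have hμ₁ := (abs_le.1 (abs_stMeasure_sub_half_le (-δ))).2
  have hμ₂ := (abs_le.1 (abs_stMeasure_sub_half_le δ)).1
  rw [abs_neg, abs_of_nonneg hδ₀] at hμ₁
  rw [abs_of_nonneg hδ₀] at hμ₂
  have h₁ := (abs_le.1 (herr (-δ) 1 (by linarith) (by linarith) le_rfl)).2
  have h₂ := (abs_le.1 (herr δ 1 (by linarith) hδ₁ le_rfl)).1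
  have hupper' := div_le_div_of_nonneg_right (Nat.cast_le (α := ℝ).2 hupper) hP.le
  have hlower' := div_le_div_of_nonneg_right (Nat.cast_le (α := ℝ).2 hlower) hP.le
  rw [Nat.cast_add, add_div] at hupper' hlower'
  rw [abs_le]
  constructor <;> linarith

lemma one_div_two_mul_sqrt_lt_inv {t u : ℝ} (ht : 0 < t) (htu : t ^ 2 < u) :
    1 / (2 * √u) < t⁻¹ := by
  have hsqrt : t < √u := (Real.lt_sqrt ht.le).2 htu
  rw [one_div]
  gcongr
  linarith

/-- Quantitative estimate from the proof of Theorem 4.2: if the Sato–Tate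
equidistribution of `B` holds with an error term `C x^{-α}` uniformly over subintervals
`[a,b] ⊆ [-1,1]`, and `|ε(p)| ≤ 1/(2√p)` for all primes `p`, then the counting function
of `{p : B(p) > ε(p)}` converges to `1/2` with a power-saving error term. -/
theorem quantitative_sign_equidistribution (B ε : ℕ → ℝ)
    (hB : ∀ p : ℕ, p.Prime → B p ∈ Set.Icc (-1 : ℝ) 1)
    (C α : ℝ) (hC : 0 < C) (hα : 0 < α)
    (herr : ∀ a b : ℝ, -1 ≤ a → a ≤ b → b ≤ 1 → ∀ x : ℝ, 2 ≤ x →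
      |(primesCount {p : ℕ | B p ∈ Set.Icc a b} x : ℝ) / (primePi x : ℝ) - stMeasure a b|
        ≤ C * x ^ (-α))
    (hε : ∀ p : ℕ, p.Prime → |ε p| ≤ 1 / (2 * Real.sqrt p)) :
    ∃ C₁ > (0 : ℝ), ∃ β > (0 : ℝ), ∃ x₀ > (0 : ℝ), ∀ x : ℝ, x₀ < x →
      |(primesCount {p : ℕ | p.Prime ∧ ε p < B p} x : ℝ) / (primePi x : ℝ) - 1 / 2|
        ≤ C₁ * x ^ (-β) := by
  refine ⟨3 * C + 1, by linarith, α / 4, by positivity, 2, two_pos, fun x hx => ?_⟩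
  set t : ℝ := x ^ (α / 4)
  have hx₀ : 0 < x := by linarith
  have ht : 1 ≤ t := Real.one_le_rpow (by linarith) (by positivity)
  have ht₀ : 0 < t := by linarith
  have hxα : x ^ (-α) = (t ^ 4)⁻¹ := by
    rw [← Real.rpow_mul_natCast hx₀.le, Real.rpow_neg hx₀.le]
    norm_num
  refine (abs_primesCount_div_primePi_sub_half_le hx.le hB
    (fun a b ha hab hb => herr a b ha hab hb x hx.le) (sq_nonneg t) (inv_nonneg.2 ht₀.le)
    (inv_le_one_of_one_le₀ ht)
    fun p hp hpt => (hε p hp).trans_lt (one_div_two_mul_sqrt_lt_inv ht₀ hpt)).trans ?_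
  have hdecay : (t ^ 2 + 2) / t ^ 4 ≤ 3 / t := by
    rw [div_le_div_iff₀ (by positivity) ht₀]
    nlinarith [pow_le_pow_left₀ zero_le_one ht 3]
  calc t⁻¹ + (t ^ 2 + 2) * (C * x ^ (-α)) = t⁻¹ + C * ((t ^ 2 + 2) / t ^ 4) := by
        rw [hxα]; ring
    _ ≤ t⁻¹ + C * (3 / t) := by gcongr
    _ = (3 * C + 1) * x ^ (-(α / 4)) := by rw [Real.rpow_neg hx₀.le]; ring
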